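/- Let G₁ and G₂ be connected simple graphs, each on n vertices with m edges, with signless Laplacian spectra μ⁺₁ ≥ ⋯ ≥ μ⁺_n > 0 and λ⁺₁ ≥ ⋯ ≥ λ⁺_n > 0 respectively. If p is a positive integer with p ≥ 2n such that 2m/(p+n) < min(μ⁺_n, λ⁺_n), then LE⁺((G₁ ∪ K̄_p) × K_{p,p}) = LE⁺((G₂ ∪ K̄_p) × K_{p,p}). -/

import Mathlib

open SimpleGraph Matrix Finset

/-- The number of edges of a simple graph. -/
noncomputable def edgeCount {V : Type*} (G : SimpleGraph V) : ℕ := G.edgeSet.ncard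

/-- The Laplacian spectrum of a finite simple graph, as a multiset of real numbers. -/
noncomputable def lapSpec {V : Type*} [Fintype V] (G : SimpleGraph V) : Multiset ℝ := by
  classical
  exact Finset.univ.val.map (G.posSemidef_lapMatrix ℝ).1.eigenvalues

/-- The signless Laplacian matrix `D + A` is Hermitian. -/
theorem signless_isHermitian {V : Type*} [Fintype V] [DecidableEq V] (G : SimpleGraph V)
    [DecidableRel G.Adj] : (G.degMatrix ℝ + G.adjMatrix ℝ).IsHermitian := by
  rw [Matrix.IsHermitian, conjTranspose_eq_transpose_of_trivial]
  exact Matrix.IsSymm.add (isSymm_degMatrix ℝ G) (isSymm_adjMatrix G)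

/-- The signless Laplacian spectrum of a finite simple graph, as a multiset of reals. -/
noncomputable def signlessLapSpec {V : Type*} [Fintype V] (G : SimpleGraph V) : Multiset ℝ := by
  classical
  exact Finset.univ.val.map (signless_isHermitian G).eigenvalues

/-- The Laplacian energy `LE(G) = ∑ |μ_i - 2m/n|`. -/
noncomputable def lapEnergy {V : Type*} [Fintype V] (G : SimpleGraph V) : ℝ :=
  ((lapSpec G).map (fun x => |x - 2 * (edgeCount G : ℝ) / (Fintype.card V : ℝ)|)).sum

/-- The signless Laplacian energy `LE⁺(G) = ∑ |μ⁺_i - 2m/n|`. -/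
noncomputable def signlessLapEnergy {V : Type*} [Fintype V] (G : SimpleGraph V) : ℝ :=
  ((signlessLapSpec G).map (fun x => |x - 2 * (edgeCount G : ℝ) / (Fintype.card V : ℝ)|)).sum

/-- The join `G ∨ H` of two graphs: disjoint union plus all edges between them. -/
def SimpleGraph.join {V W : Type*} (G : SimpleGraph V) (H : SimpleGraph W) :
    SimpleGraph (V ⊕ W) where
  Adj a b :=
    match a, b with
    | Sum.inl u, Sum.inl v => G.Adj u v
    | Sum.inr u, Sum.inr v => H.Adj u v
    | Sum.inl _, Sum.inr _ => True
    | Sum.inr _, Sum.inl _ => True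
  symm := ⟨by rintro (u | u) (v | v) h <;> simp_all [adj_comm]⟩
  loopless := ⟨by rintro (u | u) h <;> simp_all⟩

/-- The tensor (Kronecker) product `G ⊗ H` of two graphs. -/
def SimpleGraph.tensorProd {V W : Type*} (G : SimpleGraph V) (H : SimpleGraph W) :
    SimpleGraph (V × W) where
  Adj a b := G.Adj a.1 b.1 ∧ H.Adj a.2 b.2
  symm := ⟨fun a b h => ⟨h.1.symm, h.2.symm⟩⟩
  loopless := ⟨fun a h => G.irrefl h.1⟩

/-!
The signless Laplacian of a Cartesian product is the Kronecker sum `Q(G) ⊗ I + I ⊗ Q(H)`, so the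
spectrum of `(G ∪ K̄_p) × K_{p,p}` consists of the sums `α + β` with `α` in the spectrum of `G`
extended by `p` zeros and `β ∈ {2p, 0, p^(2p-2)}`, the spectrum of `K_{p,p}`. Its mean is `c + p`
with `c = 2m/(n+p)`. For `|α - c| ≤ p` the terms `β = 2p` and `β = 0` contribute
`|α - c + p| + |α - c - p| = 2p`, so `LE⁺ = 2p(n+p) + (2p-2) ∑ |α - c|`. Every eigenvalue of `G`
lies in `(c, 2Δ] ⊆ (c, p]` (Gershgorin), hence `∑ |α - c| = (2m - nc) + pc` depends only on
`n`, `m` and `p`.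
-/

open Polynomial Kronecker

theorem Multiset.map_product_map {α β γ δ : Type*} (s : Multiset α) (t : Multiset β)
    (f : α → γ) (g : β → δ) : s.map f ×ˢ t.map g = (s ×ˢ t).map (Prod.map f g) := by
  induction s using Multiset.induction with
  | empty => simp
  | cons a s ih => simp [cons_product, ih]

theorem Multiset.sum_map_product {α β M : Type*} [AddCommMonoid M] (s : Multiset α)
    (t : Multiset β) (f : α × β → M) :
    ((s ×ˢ t).map f).sum = (s.map fun a => (t.map fun b => f (a, b)).sum).sum := by
  induction s using Multiset.induction <;> simp_all [cons_product]

theorem Fin.univ_val_map_update_const {α : Type*} {p : ℕ} [NeZero p] (a b : α) :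
    univ.val.map (Function.update (fun _ : Fin p => b) 0 a) =
      a ::ₘ Multiset.replicate (p - 1) b := by
  obtain ⟨q, rfl⟩ : ∃ q, p = q + 1 := ⟨p - 1, by have := NeZero.pos p; omega⟩
  rw [Fin.univ_val_map, List.ofFn_succ]
  simp [Fin.succ_ne_zero, List.ofFn_const]
  rfl

namespace Matrix

variable {m n : Type*} [Fintype m] [Fintype n] [DecidableEq m] [DecidableEq n]

theorem roots_charpoly_of_eq_mul_diagonal_mul {R : Type*} [CommRing R] [IsDomain R]
    {A P P' : Matrix n n R} {d : n → R} (hP : P' * P = 1) (hA : A = P * diagonal d * P') :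
    A.charpoly.roots = univ.val.map d := by
  rw [hA, charpoly_mul_comm, ← mul_assoc, hP, one_mul, charpoly_diagonal,
    roots_prod _ _ (prod_ne_zero_iff.mpr fun i _ => X_sub_C_ne_zero (d i))]
  simp

theorem roots_charpoly_of_mul_eq_mul_diagonal {R : Type*} [CommRing R] [IsDomain R]
    {A P P' : Matrix n n R} {d : n → R} (hP : P' * P = 1) (hAP : A * P = P * diagonal d) :
    A.charpoly.roots = univ.val.map d :=
  roots_charpoly_of_eq_mul_diagonal_mul hP <| by
    rw [← hAP, mul_assoc, mul_eq_one_comm.mp hP, mul_one]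

theorem kroneckerSum_eq_mul_diagonal_mul {R : Type*} [CommRing R] {A P P' : Matrix m m R}
    {B Q Q' : Matrix n n R} {a : m → R} {b : n → R} (hP : P * P' = 1) (hQ : Q * Q' = 1)
    (hA : A = P * diagonal a * P') (hB : B = Q * diagonal b * Q') :
    A ⊗ₖ 1 + 1 ⊗ₖ B =
      (P ⊗ₖ Q) * diagonal (fun x => a x.1 + b x.2) * (P' ⊗ₖ Q') := by
  have hdiag :
      diagonal (fun x : m × n => a x.1 + b x.2) = diagonal a ⊗ₖ 1 + 1 ⊗ₖ diagonal b := by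
    simp only [← diagonal_one, diagonal_kronecker_diagonal, diagonal_add, mul_one, one_mul]
  rw [hdiag, mul_add, add_mul, ← mul_kronecker_mul, ← mul_kronecker_mul, ← mul_kronecker_mul,
    ← mul_kronecker_mul, mul_one, mul_one, hP, hQ, ← hA, ← hB]

theorem IsHermitian.roots_charpoly_kroneckerSum {𝕜 : Type*} [RCLike 𝕜] {A : Matrix m m 𝕜}
    {B : Matrix n n 𝕜} (hA : A.IsHermitian) (hB : B.IsHermitian) :
    (A ⊗ₖ 1 + 1 ⊗ₖ B).charpoly.roots =
      (A.charpoly.roots ×ˢ B.charpoly.roots).map fun x => x.1 + x.2 := by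
  have hU := hA.eigenvectorUnitary.2
  have hV := hB.eigenvectorUnitary.2
  rw [roots_charpoly_of_eq_mul_diagonal_mul _ (kroneckerSum_eq_mul_diagonal_mul
      (mem_unitaryGroup_iff.mp hU) (mem_unitaryGroup_iff.mp hV)
      (by simpa using hA.spectral_theorem) (by simpa using hB.spectral_theorem)),
    hA.roots_charpoly_eq_eigenvalues, hB.roots_charpoly_eq_eigenvalues,
    Multiset.map_product_map, Multiset.map_map, ← Finset.product_val, Finset.univ_product_univ]
  · rfl
  · rw [← mul_kronecker_mul, mem_unitaryGroup_iff'.mp hU, mem_unitaryGroup_iff'.mp hV,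
      one_kronecker_one]

section AllOnes

variable (p : ℕ) [NeZero p]

/-- Its columns are the all-ones vector (eigenvalue `p` of the all-ones matrix) and, for `j ≠ 0`,
`e₀ - eⱼ` (eigenvalue `0`). -/
def allOnesEigenbasis : Matrix (Fin p) (Fin p) ℝ :=
  of fun i j => if j = 0 then 1 else (if i = 0 then 1 else 0) - (if i = j then 1 else 0)

noncomputable def allOnesEigenbasisInv : Matrix (Fin p) (Fin p) ℝ :=
  of fun i j => (p : ℝ)⁻¹ - if i = j ∧ i ≠ 0 then 1 else 0

theorem allOnesEigenbasisInv_mul : allOnesEigenbasisInv p * allOnesEigenbasis p = 1 := by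
  ext i j
  by_cases hj : j = 0
  · by_cases hi : i = 0 <;>
      simp [mul_apply, allOnesEigenbasis, allOnesEigenbasisInv, one_apply, hj, hi]
  · by_cases hij : i = j <;>
      simp [mul_apply, allOnesEigenbasis, allOnesEigenbasisInv, one_apply, mul_sub,
        sum_sub_distrib, hj, hij]

theorem allOnes_mul_allOnesEigenbasis :
    of (fun _ _ => (1 : ℝ)) * allOnesEigenbasis p =
      allOnesEigenbasis p * diagonal (Pi.single 0 (p : ℝ)) := by
  ext i j
  rw [mul_diagonal]
  by_cases hj : j = 0 <;> simp [mul_apply, allOnesEigenbasis, sum_sub_distrib, hj]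

end AllOnes

end Matrix

noncomputable def sumAbsDeviation (s : Multiset ℝ) : ℝ :=
  (s.map fun x => |x - s.sum / Multiset.card s|).sum

theorem abs_add_add_abs_sub_of_abs_le {u a : ℝ} (h : |u| ≤ a) : |u + a| + |u - a| = 2 * a := by
  rw [abs_le] at h
  rw [abs_of_nonneg (by linarith), abs_of_nonpos (by linarith)]
  ring

theorem sumAbsDeviation_map_add_product (s : Multiset ℝ) (a : ℝ) (k : ℕ)
    (hs : ∀ x ∈ s, |x - s.sum / Multiset.card s| ≤ a) :
    sumAbsDeviation ((s ×ˢ (2 * a ::ₘ 0 ::ₘ Multiset.replicate k a)).map fun x => x.1 + x.2) =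
      2 * a * Multiset.card s + k * sumAbsDeviation s := by
  rcases eq_or_ne s 0 with rfl | hs0
  · simp [sumAbsDeviation]
  set t := 2 * a ::ₘ 0 ::ₘ Multiset.replicate k a
  set m := s.sum / Multiset.card s
  have hcard : (Multiset.card s : ℝ) ≠ 0 := by simpa using hs0
  have hmean : ((s ×ˢ t).map fun x => x.1 + x.2).sum /
      Multiset.card ((s ×ˢ t).map fun x => x.1 + x.2) = m + a := by
    rw [Multiset.sum_map_product, Multiset.card_map, Multiset.card_product]
    simp [Multiset.sum_map_add, t, m]
    field_simp
    rw [Multiset.sum_map_mul_left, Multiset.map_id']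
    ring
  rw [sumAbsDeviation, hmean, Multiset.map_map, Multiset.sum_map_product]
  calc _ = (s.map fun x => 2 * a + k * |x - m|).sum := by
        refine congrArg _ (Multiset.map_congr rfl fun x hx => ?_)
        simp only [t, Function.comp_apply, Multiset.map_cons, Multiset.map_replicate,
          Multiset.sum_cons, Multiset.sum_replicate, nsmul_eq_mul]
        rw [show x + 2 * a - (m + a) = x - m + a by ring, show x + 0 - (m + a) = x - m - a by ring,
          show x + a - (m + a) = x - m by ring]
        linarith [abs_add_add_abs_sub_of_abs_le (hs x hx)]
    _ = _ := by
      simp [Multiset.sum_map_add, Multiset.sum_map_mul_left, sumAbsDeviation, m]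
      ring

theorem sumAbsDeviation_add_replicate_zero (s : Multiset ℝ) (p : ℕ) (hsum : 0 ≤ s.sum)
    (hs : ∀ x ∈ s, s.sum / (Multiset.card s + p) ≤ x) :
    sumAbsDeviation (s + Multiset.replicate p 0) = 2 * p * s.sum / (Multiset.card s + p) := by
  set c := s.sum / (Multiset.card s + p)
  have hc : 0 ≤ c := by positivity
  have hdev : (s.map fun x => |x - c|).sum = s.sum - Multiset.card s * c := by
    rw [Multiset.map_congr rfl fun x hx => abs_of_nonneg (sub_nonneg.mpr (hs x hx)),
      Multiset.sum_map_sub, Multiset.map_id', Multiset.map_const', Multiset.sum_replicate,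
      nsmul_eq_mul]
  have hmean :
      (s + Multiset.replicate p 0).sum / Multiset.card (s + Multiset.replicate p 0) = c := by
    simp [c]
  rw [sumAbsDeviation, hmean, Multiset.map_add, Multiset.sum_add, hdev, Multiset.map_replicate,
    Multiset.sum_replicate, nsmul_eq_mul, zero_sub, abs_neg, abs_of_nonneg hc]
  rcases eq_or_ne ((Multiset.card s : ℝ) + p) 0 with h | h
  · have hs0 : Multiset.card s = 0 := by
      exact_mod_cast ((add_eq_zero_iff_of_nonneg (Nat.cast_nonneg _) (Nat.cast_nonneg _)).mp h).1
    simp [c, Multiset.card_eq_zero.mp hs0]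
  · simp only [c]
    field_simp
    ring

namespace SimpleGraph

variable {V W : Type*} [Fintype V] [Fintype W]

theorem card_signlessLapSpec (G : SimpleGraph V) :
    Multiset.card (signlessLapSpec G) = Fintype.card V := by
  simp [signlessLapSpec]

variable [DecidableEq V] [DecidableEq W]

def signlessLapMatrix (R : Type*) [AddMonoidWithOne R] (G : SimpleGraph V) [DecidableRel G.Adj] :
    Matrix V V R :=
  G.degMatrix R + G.adjMatrix R

section Matrices

variable (R : Type*) (G : SimpleGraph V) (H : SimpleGraph W) [DecidableRel G.Adj]
  [DecidableRel H.Adj]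

theorem signlessLapMatrix_sum [AddCommMonoidWithOne R] [DecidableRel (G ⊕g H).Adj] :
    (G ⊕g H).signlessLapMatrix R =
      Matrix.fromBlocks (G.signlessLapMatrix R) 0 0 (H.signlessLapMatrix R) := by
  have hdeg : (G ⊕g H).degMatrix R = Matrix.fromBlocks (G.degMatrix R) 0 0 (H.degMatrix R) := by
    rw [degMatrix, degMatrix, degMatrix, Matrix.fromBlocks_diagonal]
    congr 1
    ext (v | w) <;>
      simp only [degree_eq_sum_if_adj, Fintype.sum_sum_type, sum_adj_inl, sum_adj_inr] <;> simp
  ext (i | i) (j | j) <;> simp [signlessLapMatrix, hdeg, adjMatrix_apply]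

theorem signlessLapMatrix_boxProd [Semiring R] [DecidableRel (G □ H).Adj] :
    (G □ H).signlessLapMatrix R =
      G.signlessLapMatrix R ⊗ₖ 1 + 1 ⊗ₖ H.signlessLapMatrix R := by
  ext ⟨u, v⟩ ⟨u', v'⟩
  by_cases hu : u = u' <;> by_cases hv : v = v' <;>
    simp [signlessLapMatrix, degMatrix, adjMatrix_apply, degree_boxProd, hu, hv]

theorem isHermitian_signlessLapMatrix : (G.signlessLapMatrix ℝ).IsHermitian :=
  signless_isHermitian G

theorem signlessLapSpec_eq_roots_charpoly :
    signlessLapSpec G = (G.signlessLapMatrix ℝ).charpoly.roots := by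
  classical
  rw [(isHermitian_signlessLapMatrix G).roots_charpoly_eq_eigenvalues, signlessLapSpec,
    RCLike.ofReal_real_eq_id, Function.id_comp]
  congr!
  unfold signlessLapMatrix
  congr!

theorem sum_signlessLapSpec : (signlessLapSpec G).sum = 2 * edgeCount G := by
  rw [signlessLapSpec_eq_roots_charpoly, ← Matrix.trace_eq_sum_roots_charpoly_of_splits
    (isHermitian_signlessLapMatrix G).splits_charpoly, signlessLapMatrix, Matrix.trace_add,
    trace_adjMatrix, add_zero, degMatrix, Matrix.trace_diagonal, edgeCount, ← coe_edgeFinset,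
    Set.ncard_coe_finset]
  exact_mod_cast G.sum_degrees_eq_twice_card_edges

theorem le_two_mul_maxDegree_of_mem_signlessLapSpec {x : ℝ} (hx : x ∈ signlessLapSpec G) :
    x ≤ 2 * G.maxDegree := by
  rw [signlessLapSpec_eq_roots_charpoly] at hx
  have hev : Module.End.HasEigenvalue (Matrix.toLin' (G.signlessLapMatrix ℝ)) x := by
    rw [Module.End.hasEigenvalue_iff_isRoot_charpoly, Matrix.charpoly_toLin']
    exact isRoot_of_mem_roots hx
  obtain ⟨k, hk⟩ := eigenvalue_mem_ball hev
  have hrow : ∑ l ∈ univ.erase k, ‖G.signlessLapMatrix ℝ k l‖ = G.degree k := by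
    rw [degree_eq_sum_if_adj, ← sum_erase_add _ _ (mem_univ k), if_neg (G.irrefl (v := k)),
      add_zero]
    refine sum_congr rfl fun l hl => ?_
    by_cases hkl : G.Adj k l <;>
      simp [signlessLapMatrix, degMatrix, adjMatrix_apply, (ne_of_mem_erase hl).symm, hkl]
  have hdiag : G.signlessLapMatrix ℝ k k = G.degree k := by
    simp [signlessLapMatrix, degMatrix]
  rw [Metric.mem_closedBall, Real.dist_eq, hrow, hdiag] at hk
  have : (G.degree k : ℝ) ≤ G.maxDegree := by exact_mod_cast G.degree_le_maxDegree k
  linarith [(abs_le.mp hk).2]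

end Matrices

theorem signlessLapSpec_sum (G : SimpleGraph V) (H : SimpleGraph W) :
    signlessLapSpec (G ⊕g H) = signlessLapSpec G + signlessLapSpec H := by
  classical
  rw [signlessLapSpec_eq_roots_charpoly, signlessLapSpec_eq_roots_charpoly,
    signlessLapSpec_eq_roots_charpoly, signlessLapMatrix_sum, Matrix.charpoly_fromBlocks_zero₁₂,
    roots_mul ((Matrix.charpoly_monic _).mul (Matrix.charpoly_monic _)).ne_zero]

theorem signlessLapSpec_bot :
    signlessLapSpec (⊥ : SimpleGraph V) = Multiset.replicate (Fintype.card V) 0 := by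
  classical
  have h : (⊥ : SimpleGraph V).signlessLapMatrix ℝ = Matrix.diagonal fun _ => 0 := by
    ext i j
    simp [signlessLapMatrix, degMatrix]
  rw [signlessLapSpec_eq_roots_charpoly,
    Matrix.roots_charpoly_of_eq_mul_diagonal_mul (one_mul 1) (by rw [h, one_mul, mul_one]),
    Multiset.map_const', card_val, card_univ]

theorem signlessLapSpec_boxProd (G : SimpleGraph V) (H : SimpleGraph W) :
    signlessLapSpec (G □ H) =
      (signlessLapSpec G ×ˢ signlessLapSpec H).map fun x => x.1 + x.2 := by
  classical
  rw [signlessLapSpec_eq_roots_charpoly, signlessLapSpec_eq_roots_charpoly,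
    signlessLapSpec_eq_roots_charpoly, signlessLapMatrix_boxProd]
  exact (isHermitian_signlessLapMatrix G).roots_charpoly_kroneckerSum
    (isHermitian_signlessLapMatrix H)

section CompleteBipartite

open Matrix

variable (p : ℕ)

theorem signlessLapMatrix_completeBipartiteGraph
    [DecidableRel (completeBipartiteGraph (Fin p) (Fin p)).Adj] :
    (completeBipartiteGraph (Fin p) (Fin p)).signlessLapMatrix ℝ =
      fromBlocks ((p : ℝ) • 1) (of fun _ _ => 1) (of fun _ _ => 1) ((p : ℝ) • 1) := by
  have hdeg (x) : ((completeBipartiteGraph (Fin p) (Fin p)).degree x : ℝ) = p := by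
    rcases x with i | i <;> simp only [degree_eq_sum_if_adj, Fintype.sum_sum_type] <;> simp
  ext (i | i) (j | j) <;>
    simp [signlessLapMatrix, degMatrix, adjMatrix_apply, hdeg, diagonal_apply, one_apply]

variable [NeZero p]

/-- Its columns are `(v, v)` and `(v, -v)` for the columns `v` of `allOnesEigenbasis`. -/
def completeBipartiteEigenbasis : Matrix (Fin p ⊕ Fin p) (Fin p ⊕ Fin p) ℝ :=
  fromBlocks (allOnesEigenbasis p) (allOnesEigenbasis p) (allOnesEigenbasis p)
    (-allOnesEigenbasis p)

noncomputable def completeBipartiteEigenbasisInv : Matrix (Fin p ⊕ Fin p) (Fin p ⊕ Fin p) ℝ :=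
  (2 : ℝ)⁻¹ • fromBlocks (allOnesEigenbasisInv p) (allOnesEigenbasisInv p)
    (allOnesEigenbasisInv p) (-allOnesEigenbasisInv p)

def completeBipartiteSignlessEigenvalues : Fin p ⊕ Fin p → ℝ :=
  Sum.elim (Function.update (fun _ => (p : ℝ)) 0 (2 * p))
    (Function.update (fun _ => (p : ℝ)) 0 0)

theorem completeBipartiteEigenbasisInv_mul :
    completeBipartiteEigenbasisInv p * completeBipartiteEigenbasis p = 1 := by
  rw [completeBipartiteEigenbasisInv, completeBipartiteEigenbasis, smul_mul, fromBlocks_multiply]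
  simp only [Matrix.neg_mul, Matrix.mul_neg, neg_neg, add_neg_cancel, allOnesEigenbasisInv_mul]
  ext (i | i) (j | j) <;> simp [one_apply] <;> split_ifs <;> norm_num

theorem signlessLapMatrix_completeBipartiteGraph_mul_eigenbasis
    [DecidableRel (completeBipartiteGraph (Fin p) (Fin p)).Adj] :
    (completeBipartiteGraph (Fin p) (Fin p)).signlessLapMatrix ℝ * completeBipartiteEigenbasis p =
      completeBipartiteEigenbasis p * diagonal (completeBipartiteSignlessEigenvalues p) := by
  have hF₁ :
      allOnesEigenbasis p * diagonal (Function.update (fun _ : Fin p => (p : ℝ)) 0 (2 * p)) =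
      (p : ℝ) • allOnesEigenbasis p + of (fun _ _ => 1) * allOnesEigenbasis p := by
    have : diagonal (Function.update (fun _ : Fin p => (p : ℝ)) 0 (2 * p)) =
        (p : ℝ) • 1 + diagonal (Pi.single 0 (p : ℝ)) := by
      ext i j
      obtain rfl | hij := eq_or_ne i j
      · by_cases hi : i = 0 <;> simp [hi]
        ring
      · simp [diagonal_apply_ne _ hij, one_apply_ne hij]
    rw [allOnes_mul_allOnesEigenbasis, this, mul_add, Matrix.mul_smul, mul_one]
  have hF₂ : allOnesEigenbasis p * diagonal (Function.update (fun _ : Fin p => (p : ℝ)) 0 0) =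
      (p : ℝ) • allOnesEigenbasis p - of (fun _ _ => 1) * allOnesEigenbasis p := by
    have : diagonal (Function.update (fun _ : Fin p => (p : ℝ)) 0 0) =
        (p : ℝ) • 1 - diagonal (Pi.single 0 (p : ℝ)) := by
      ext i j
      obtain rfl | hij := eq_or_ne i j
      · by_cases hi : i = 0 <;> simp [hi]
      · simp [diagonal_apply_ne _ hij, one_apply_ne hij]
    rw [allOnes_mul_allOnesEigenbasis, this, mul_sub, Matrix.mul_smul, mul_one]
  rw [signlessLapMatrix_completeBipartiteGraph, completeBipartiteEigenbasis,
    completeBipartiteSignlessEigenvalues, ← fromBlocks_diagonal, fromBlocks_multiply,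
    fromBlocks_multiply]
  simp only [Matrix.mul_zero, add_zero, zero_add, smul_mul, Matrix.one_mul, Matrix.mul_neg,
    Matrix.neg_mul, hF₁, hF₂]
  congr 1 <;> abel

theorem signlessLapSpec_completeBipartiteGraph :
    signlessLapSpec (completeBipartiteGraph (Fin p) (Fin p)) =
      (2 * p : ℝ) ::ₘ 0 ::ₘ Multiset.replicate (2 * (p - 1)) (p : ℝ) := by
  classical
  rw [signlessLapSpec_eq_roots_charpoly, roots_charpoly_of_mul_eq_mul_diagonal
      (completeBipartiteEigenbasisInv_mul p)
      (signlessLapMatrix_completeBipartiteGraph_mul_eigenbasis p),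
    ← univ_disjSum_univ, val_disjSum, Multiset.map_disjSum]
  simp only [completeBipartiteSignlessEigenvalues, Sum.elim_inl, Sum.elim_inr,
    Fin.univ_val_map_update_const, Multiset.cons_add, Multiset.add_cons, ← Multiset.replicate_add,
    two_mul]
  exact Multiset.cons_swap _ _ _

end CompleteBipartite

variable {V : Type*} [Fintype V]

theorem signlessLapEnergy_eq_sumAbsDeviation (G : SimpleGraph V) :
    signlessLapEnergy G = sumAbsDeviation (signlessLapSpec G) := by
  classical
  rw [signlessLapEnergy, sumAbsDeviation, sum_signlessLapSpec, card_signlessLapSpec]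

theorem signlessLapEnergy_sum_bot_boxProd_completeBipartiteGraph [Nonempty V]
    (G : SimpleGraph V) (p : ℕ) (hp : 2 * Fintype.card V ≤ p)
    (hG : ∀ x ∈ signlessLapSpec G, 2 * edgeCount G / (Fintype.card V + p : ℝ) < x) :
    signlessLapEnergy
        ((G ⊕g (⊥ : SimpleGraph (Fin p))) □ completeBipartiteGraph (Fin p) (Fin p)) =
      2 * p * (Fintype.card V + p) +
        2 * (p - 1) * (2 * p * (2 * edgeCount G) / (Fintype.card V + p)) := by
  classical
  have : NeZero p := ⟨by have := Fintype.card_pos (α := V); omega⟩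
  set c := 2 * (edgeCount G : ℝ) / (Fintype.card V + p)
  have hle (x) (hx : x ∈ signlessLapSpec G) : x ≤ p := by
    have : 2 * G.maxDegree ≤ p := by have := G.maxDegree_lt_card_verts; omega
    exact (le_two_mul_maxDegree_of_mem_signlessLapSpec G hx).trans (by exact_mod_cast this)
  obtain ⟨x₀, hx₀⟩ : ∃ x, x ∈ signlessLapSpec G :=
    Multiset.exists_mem_of_ne_zero (by simp [← Multiset.card_eq_zero, card_signlessLapSpec])
  have hmean : (signlessLapSpec G + Multiset.replicate p 0).sum /
      Multiset.card (signlessLapSpec G + Multiset.replicate p 0) = c := by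
    simp [sum_signlessLapSpec, card_signlessLapSpec, c]
  have hnear (x) (hx : x ∈ signlessLapSpec G + Multiset.replicate p 0) : |x - c| ≤ p := by
    have hc : 0 ≤ c := by positivity
    rcases Multiset.mem_add.mp hx with hx | hx
    · rw [abs_le]
      constructor <;> linarith [hG x hx, hle x hx]
    · rw [Multiset.eq_of_mem_replicate hx, zero_sub, abs_neg, abs_of_nonneg hc]
      linarith [hG x₀ hx₀, hle x₀ hx₀]
  rw [signlessLapEnergy_eq_sumAbsDeviation, signlessLapSpec_boxProd, signlessLapSpec_sum,
    signlessLapSpec_bot, Fintype.card_fin, signlessLapSpec_completeBipartiteGraph,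
    sumAbsDeviation_map_add_product _ _ _ (by rw [hmean]; exact hnear),
    sumAbsDeviation_add_replicate_zero]
  · rw [Multiset.card_add, Multiset.card_replicate, sum_signlessLapSpec, card_signlessLapSpec]
    push_cast [Nat.cast_sub NeZero.one_le]
    ring
  · rw [sum_signlessLapSpec]
    positivity
  · rw [sum_signlessLapSpec, card_signlessLapSpec]
    exact fun x hx => (hG x hx).le

end SimpleGraph

theorem stmt9 (n m p : ℕ) (hn : 1 ≤ n) (hpn : 2 * n ≤ p)
    (G₁ G₂ : SimpleGraph (Fin n))
    (hm₁ : edgeCount G₁ = m) (hm₂ : edgeCount G₂ = m)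
    (μ ν : Fin n → ℝ) (hμmono : Antitone μ) (hνmono : Antitone ν)
    (hμspec : signlessLapSpec G₁ = Finset.univ.val.map μ)
    (hνspec : signlessLapSpec G₂ = Finset.univ.val.map ν)
    (hcond : 2 * (m : ℝ) / ((p : ℝ) + (n : ℝ)) < min (μ ⟨n - 1, by omega⟩) (ν ⟨n - 1, by omega⟩)) :
    signlessLapEnergy ((G₁ ⊕g (⊥ : SimpleGraph (Fin p))) □ (completeBipartiteGraph (Fin p) (Fin p))) =
      signlessLapEnergy ((G₂ ⊕g (⊥ : SimpleGraph (Fin p))) □ (completeBipartiteGraph (Fin p) (Fin p))) := by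
  have : Nonempty (Fin n) := ⟨⟨0, hn⟩⟩
  have hp : 2 * Fintype.card (Fin n) ≤ p := by rwa [Fintype.card_fin]
  have hbelow {G : SimpleGraph (Fin n)} {f : Fin n → ℝ} (hm : edgeCount G = m) (hf : Antitone f)
      (hspec : signlessLapSpec G = univ.val.map f)
      (hlt : 2 * (m : ℝ) / ((p : ℝ) + (n : ℝ)) < f ⟨n - 1, by omega⟩) :
      ∀ x ∈ signlessLapSpec G, 2 * edgeCount G / (Fintype.card (Fin n) + p : ℝ) < x := by
    intro x hx
    obtain ⟨i, -, rfl⟩ := Multiset.mem_map.mp (hspec ▸ hx)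
    rw [Fintype.card_fin, hm, add_comm (n : ℝ)]
    exact hlt.trans_le (hf (Fin.le_def.mpr (by simp only; omega)))
  rw [SimpleGraph.signlessLapEnergy_sum_bot_boxProd_completeBipartiteGraph G₁ p hp
      (hbelow hm₁ hμmono hμspec (hcond.trans_le (min_le_left _ _))),
    SimpleGraph.signlessLapEnergy_sum_bot_boxProd_completeBipartiteGraph G₂ p hp
      (hbelow hm₂ hνmono hνspec (hcond.trans_le (min_le_right _ _))), hm₁, hm₂]
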